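/- arXiv:2506.14013 — 4 statements merged into one kernel-verified Lean document; each statement's English description precedes it below -/
import Mathlib

section
/- For all integers x and y satisfying x^2 - 4xy + y^2 = 1, the polynomial identity holds: letting a = 5x^2 - 12xy + 8y^2, b = (31x^4 - 55x^3 y + 75x^2 y^2 - 50xy^3 + 16y^4 - 17x^3 + 33x^2 y - 28xy^2 + 14y^3)/2, c = (31x^4 - 55x^3 y + 75x^2 y^2 - 50xy^3 + 16y^4 + 17x^3 - 33x^2 y + 28xy^2 - 14y^3)/2, one has abc + 1 = ((22y^5 - 24xy^4 - 8x^2 y^3 + 84x^3 y^2 - 119x^4 y + 58x^5)/2)^2. -/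
/-!
Write `b, c = (S ∓ T) / 2` with `S` the quartic and `T` the cubic part, so that
`4 (a b c + 1) = a (S² - T²) + 4`. With `q = x² - 4xy + y²`, the form
`a S² - a T² q + 4 q⁵` is homogeneous of degree 10 and is identically the square of the quintic `D`;
on the conic `q = 1` this reads `a (S² - T²) + 4 = D²`.
-/

theorem quintic_sq_eq_homogenized {R : Type*} [CommRing R] (x y : R) :
    (5 * x ^ 2 - 12 * x * y + 8 * y ^ 2) *
        (31 * x ^ 4 - 55 * x ^ 3 * y + 75 * x ^ 2 * y ^ 2 - 50 * x * y ^ 3 + 16 * y ^ 4) ^ 2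
      - (5 * x ^ 2 - 12 * x * y + 8 * y ^ 2) *
        (17 * x ^ 3 - 33 * x ^ 2 * y + 28 * x * y ^ 2 - 14 * y ^ 3) ^ 2 *
        (x ^ 2 - 4 * x * y + y ^ 2)
      + 4 * (x ^ 2 - 4 * x * y + y ^ 2) ^ 5 =
    (22 * y ^ 5 - 24 * x * y ^ 4 - 8 * x ^ 2 * y ^ 3 + 84 * x ^ 3 * y ^ 2
      - 119 * x ^ 4 * y + 58 * x ^ 5) ^ 2 := by
  ring

theorem quintic_sq_eq_of_pell {R : Type*} [CommRing R] {x y : R}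
    (h : x ^ 2 - 4 * x * y + y ^ 2 = 1) :
    (5 * x ^ 2 - 12 * x * y + 8 * y ^ 2) *
        ((31 * x ^ 4 - 55 * x ^ 3 * y + 75 * x ^ 2 * y ^ 2 - 50 * x * y ^ 3 + 16 * y ^ 4) ^ 2
          - (17 * x ^ 3 - 33 * x ^ 2 * y + 28 * x * y ^ 2 - 14 * y ^ 3) ^ 2) + 4 =
    (22 * y ^ 5 - 24 * x * y ^ 4 - 8 * x ^ 2 * y ^ 3 + 84 * x ^ 3 * y ^ 2
      - 119 * x ^ 4 * y + 58 * x ^ 5) ^ 2 := by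
  have key := quintic_sq_eq_homogenized x y
  rw [h, one_pow, mul_one] at key
  linear_combination key

theorem abc_plus_one_square (x y : ℤ) (h : x ^ 2 - 4 * x * y + y ^ 2 = 1) :
    ((5 * (x : ℚ) ^ 2 - 12 * x * y + 8 * y ^ 2) *
      ((31 * (x : ℚ) ^ 4 - 55 * x ^ 3 * y + 75 * x ^ 2 * y ^ 2 - 50 * x * y ^ 3 + 16 * y ^ 4
        - 17 * x ^ 3 + 33 * x ^ 2 * y - 28 * x * y ^ 2 + 14 * y ^ 3) / 2) *
      ((31 * (x : ℚ) ^ 4 - 55 * x ^ 3 * y + 75 * x ^ 2 * y ^ 2 - 50 * x * y ^ 3 + 16 * y ^ 4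
        + 17 * x ^ 3 - 33 * x ^ 2 * y + 28 * x * y ^ 2 - 14 * y ^ 3) / 2)) + 1 =
    ((22 * (y : ℚ) ^ 5 - 24 * x * y ^ 4 - 8 * x ^ 2 * y ^ 3 + 84 * x ^ 3 * y ^ 2
      - 119 * x ^ 4 * y + 58 * x ^ 5) / 2) ^ 2 := by
  have hq : (x : ℚ) ^ 2 - 4 * x * y + y ^ 2 = 1 := by exact_mod_cast h
  linear_combination quintic_sq_eq_of_pell hq / 4
end

section
/- For all integers x, y with x^2 - 4xy + y^2 = 1, the identity 4·abc = (3y+8x)(5x^2-12xy+8y^2)(2y^3-2xy^2-2x^2y+3x^3)(10y^4-22xy^3+50x^2y^2-39x^3y+28x^4) holds, where a = 5x^2-12xy+8y^2, b = (31x^4-55x^3y+75x^2y^2-50xy^3+16y^4-17x^3+33x^2y-28xy^2+14y^3)/2, c = (31x^4-55x^3y+75x^2y^2-50xy^3+16y^4+17x^3-33x^2y+28xy^2-14y^3)/2. -/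
/-!
Write `b = (P - Q)/2` and `c = (P + Q)/2`, so that `4bc = P² - Q²`. On the conic
`x² - 4xy + y² = 1` this equals `P² - (x² - 4xy + y²) Q²`, and that binary form of degree 8
factors over `ℤ` as `(3y + 8x)(2y³ - 2xy² - 2x²y + 3x³)(10y⁴ - 22xy³ + 50x²y² - 39x³y + 28x⁴)`.
-/

theorem sq_sub_mul_sq_factorization {R : Type*} [CommRing R] (x y : R) :
    (31 * x ^ 4 - 55 * x ^ 3 * y + 75 * x ^ 2 * y ^ 2 - 50 * x * y ^ 3 + 16 * y ^ 4) ^ 2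
      - (x ^ 2 - 4 * x * y + y ^ 2) *
        (17 * x ^ 3 - 33 * x ^ 2 * y + 28 * x * y ^ 2 - 14 * y ^ 3) ^ 2 =
    (3 * y + 8 * x) * (2 * y ^ 3 - 2 * x * y ^ 2 - 2 * x ^ 2 * y + 3 * x ^ 3) *
      (10 * y ^ 4 - 22 * x * y ^ 3 + 50 * x ^ 2 * y ^ 2 - 39 * x ^ 3 * y + 28 * x ^ 4) := by
  ring

theorem four_abc_factorization (x y : ℤ) (h : x ^ 2 - 4 * x * y + y ^ 2 = 1) :
    4 * ((5 * (x : ℚ) ^ 2 - 12 * x * y + 8 * y ^ 2) *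
      ((31 * (x : ℚ) ^ 4 - 55 * x ^ 3 * y + 75 * x ^ 2 * y ^ 2 - 50 * x * y ^ 3 + 16 * y ^ 4
        - 17 * x ^ 3 + 33 * x ^ 2 * y - 28 * x * y ^ 2 + 14 * y ^ 3) / 2) *
      ((31 * (x : ℚ) ^ 4 - 55 * x ^ 3 * y + 75 * x ^ 2 * y ^ 2 - 50 * x * y ^ 3 + 16 * y ^ 4
        + 17 * x ^ 3 - 33 * x ^ 2 * y + 28 * x * y ^ 2 - 14 * y ^ 3) / 2)) =
    (3 * (y : ℚ) + 8 * x) * (5 * x ^ 2 - 12 * x * y + 8 * y ^ 2) *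
      (2 * y ^ 3 - 2 * x * y ^ 2 - 2 * x ^ 2 * y + 3 * x ^ 3) *
      (10 * y ^ 4 - 22 * x * y ^ 3 + 50 * x ^ 2 * y ^ 2 - 39 * x ^ 3 * y + 28 * x ^ 4) := by
  have hq : (x : ℚ) ^ 2 - 4 * x * y + y ^ 2 = 1 := by exact_mod_cast h
  have key := sq_sub_mul_sq_factorization (x : ℚ) (y : ℚ)
  rw [hq, one_mul] at key
  linear_combination (5 * (x : ℚ) ^ 2 - 12 * x * y + 8 * y ^ 2) * key
end

section
/- For every positive integer k, the set {k, k+2, 4k+4, 16k^3+48k^2+44k+12} is a Diophantine quadruple: the product of any two distinct elements plus 1 is a perfect square. -/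
/-!
If `a * b + 1 = r ^ 2`, then `{a, b, a + b + 2 * r}` is a Diophantine triple, and any Diophantine
triple `{a, b, c}` with `a * b + 1 = r ^ 2`, `a * c + 1 = s ^ 2`, `b * c + 1 = t ^ 2` extends to the
regular quadruple `{a, b, c, a + b + c + 2 * a * b * c + 2 * r * s * t}` (Arkin–Hoggatt–Strauss).
Starting from `k * (k + 2) + 1 = (k + 1) ^ 2`, these two steps produce exactly `4 * k + 4` and
`16 * k ^ 3 + 48 * k ^ 2 + 44 * k + 12`.
-/

namespace Diophantine

variable {R : Type*} [CommSemiring R]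

def regularExtension (a b c r s t : R) : R :=
  a + b + c + 2 * a * b * c + 2 * r * s * t

lemma regularExtension_comm_left (a b c r s t : R) :
    regularExtension b a c r t s = regularExtension a b c r s t := by
  unfold regularExtension; ring

lemma regularExtension_comm_right (a b c r s t : R) :
    regularExtension a c b s r t = regularExtension a b c r s t := by
  unfold regularExtension; ring

variable {a b c r s t : R}

lemma mul_add_add_two_mul_add_one (hr : a * b + 1 = r ^ 2) :
    a * (a + b + 2 * r) + 1 = (a + r) ^ 2 ∧ b * (a + b + 2 * r) + 1 = (b + r) ^ 2 := by
  constructor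
  · calc a * (a + b + 2 * r) + 1 = a ^ 2 + 2 * a * r + (a * b + 1) := by ring
      _ = (a + r) ^ 2 := by rw [hr]; ring
  · calc b * (a + b + 2 * r) + 1 = b ^ 2 + 2 * b * r + (a * b + 1) := by ring
      _ = (b + r) ^ 2 := by rw [hr]; ring

lemma mul_regularExtension_add_one (hr : a * b + 1 = r ^ 2) (hs : a * c + 1 = s ^ 2)
    (ht : b * c + 1 = t ^ 2) :
    a * regularExtension a b c r s t + 1 = (a * t + r * s) ^ 2 := by
  calc a * regularExtension a b c r s t + 1
      = a ^ 2 * (b * c + 1) + 2 * a * r * s * t + (a * b + 1) * (a * c + 1) := by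
        unfold regularExtension; ring
    _ = (a * t + r * s) ^ 2 := by rw [hr, hs, ht]; ring

lemma regularExtension_isDiophantine (hr : a * b + 1 = r ^ 2) (hs : a * c + 1 = s ^ 2)
    (ht : b * c + 1 = t ^ 2) :
    a * regularExtension a b c r s t + 1 = (a * t + r * s) ^ 2 ∧
    b * regularExtension a b c r s t + 1 = (b * s + r * t) ^ 2 ∧
    c * regularExtension a b c r s t + 1 = (c * r + s * t) ^ 2 := by
  refine ⟨mul_regularExtension_add_one hr hs ht, ?_, ?_⟩
  · rw [← regularExtension_comm_left]
    exact mul_regularExtension_add_one (by rwa [mul_comm]) ht hs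
  · rw [← regularExtension_comm_right, ← regularExtension_comm_left]
    exact mul_regularExtension_add_one (by rwa [mul_comm]) (by rwa [mul_comm]) hr

end Diophantine

open Diophantine in
theorem diophantine_quadruple_family_general (k : ℕ) :
    IsSquare (k * (k + 2) + 1) ∧
    IsSquare (k * (4 * k + 4) + 1) ∧
    IsSquare (k * (16 * k ^ 3 + 48 * k ^ 2 + 44 * k + 12) + 1) ∧
    IsSquare ((k + 2) * (4 * k + 4) + 1) ∧
    IsSquare ((k + 2) * (16 * k ^ 3 + 48 * k ^ 2 + 44 * k + 12) + 1) ∧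
    IsSquare ((4 * k + 4) * (16 * k ^ 3 + 48 * k ^ 2 + 44 * k + 12) + 1) := by
  have hr : k * (k + 2) + 1 = (k + 1) ^ 2 := by ring
  have hc : 4 * k + 4 = k + (k + 2) + 2 * (k + 1) := by ring
  obtain ⟨hs, ht⟩ := mul_add_add_two_mul_add_one hr
  rw [← hc] at hs ht
  have hd : 16 * k ^ 3 + 48 * k ^ 2 + 44 * k + 12 =
      regularExtension k (k + 2) (4 * k + 4) (k + 1) (k + (k + 1)) (k + 2 + (k + 1)) := by
    unfold regularExtension; ring
  obtain ⟨had, hbd, hcd⟩ := regularExtension_isDiophantine hr hs ht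
  rw [hd]
  exact ⟨hr ▸ .sq _, hs ▸ .sq _, had ▸ .sq _, ht ▸ .sq _, hbd ▸ .sq _, hcd ▸ .sq _⟩

theorem diophantine_quadruple_family (k : ℕ) (hk : 0 < k) :
    IsSquare (k * (k + 2) + 1) ∧
    IsSquare (k * (4 * k + 4) + 1) ∧
    IsSquare (k * (16 * k ^ 3 + 48 * k ^ 2 + 44 * k + 12) + 1) ∧
    IsSquare ((k + 2) * (4 * k + 4) + 1) ∧
    IsSquare ((k + 2) * (16 * k ^ 3 + 48 * k ^ 2 + 44 * k + 12) + 1) ∧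
    IsSquare ((4 * k + 4) * (16 * k ^ 3 + 48 * k ^ 2 + 44 * k + 12) + 1) :=
  diophantine_quadruple_family_general k
end

section
/- For each n ≥ 0, setting x = P_{n+1}, y = P_n where P_0 = 0, P_1 = 1, P_{n+1} = 4P_n - P_{n-1}, the values a = 5x^2-12xy+8y^2, b = (31x^4-55x^3y+75x^2y^2-50xy^3+16y^4-17x^3+33x^2y-28xy^2+14y^3)/2, c = (31x^4-55x^3y+75x^2y^2-50xy^3+16y^4+17x^3-33x^2y+28xy^2-14y^3)/2 are positive integers greater than 1 (for n ≥ 1), and c = a + b + 2r where r = (17x^3-33x^2y-5x^2+28xy^2+12xy-14y^3-8y^2)/2. -/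
/-!
Write `x = P (n + 1)`, `y = P n`, `a = quadratic x y`, `k = cubic x y`, `q = quartic x y`.
Then `b = (q - k) / 2`, `c = (q + k) / 2` and `r = (k - a) / 2`, so `c - b = k = a + 2 r`.

Integrality: `P n ≡ n [ZMOD 2]`, so one of `x`, `y` is even, and for such `x`, `y` the forms
`q`, `k`, `a` all have the parity of `x`; hence `q ∓ k` and `k - a` are even.

Positivity: `P` is strictly increasing, so for `n ≥ 1` we have `1 ≤ y` and
`x = 4 y - P (n - 1) ≥ 3 y + 1`. Substituting `y = 1 + s`, `x = 3 y + 1 + t` turns `a - 1`, `k` and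
`q - k - 2` into polynomials in `s, t ≥ 0` with positive coefficients.
-/

def P : ℕ → ℤ
  | 0 => 0
  | 1 => 1
  | (n + 2) => 4 * P (n + 1) - P n

theorem P_add_two (n : ℕ) : P (n + 2) = 4 * P (n + 1) - P n := rfl

theorem even_P_iff (n : ℕ) : Even (P n) ↔ Even n := by
  induction n using Nat.twoStepInduction with
  | zero => simp [P]
  | one => simp [P]
  | more n ih _ => simp [P_add_two, ih, parity_simps, show Even (4 : ℤ) by decide]

theorem even_P_succ_or_even_P (n : ℕ) : Even (P (n + 1)) ∨ Even (P n) := by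
  simp only [even_P_iff, Nat.even_add_one]
  tauto

theorem P_nonneg_and_lt_succ (n : ℕ) : 0 ≤ P n ∧ P n < P (n + 1) := by
  induction n with
  | zero => simp [P]
  | succ n ih =>
    have := P_add_two n
    constructor <;> linarith

theorem strictMono_P : StrictMono P :=
  strictMono_nat_of_lt_succ fun n => (P_nonneg_and_lt_succ n).2

theorem one_le_P {n : ℕ} (hn : 1 ≤ n) : 1 ≤ P n :=
  strictMono_P.monotone hn

theorem three_mul_P_add_one_le (n : ℕ) : 3 * P (n + 1) + 1 ≤ P (n + 2) := by
  linarith [P_add_two n, strictMono_P n.lt_succ_self]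

section Forms

variable {R : Type*} [CommRing R]

def quadratic (x y : R) : R := 5 * x ^ 2 - 12 * x * y + 8 * y ^ 2

def cubic (x y : R) : R := 17 * x ^ 3 - 33 * x ^ 2 * y + 28 * x * y ^ 2 - 14 * y ^ 3

def quartic (x y : R) : R :=
  31 * x ^ 4 - 55 * x ^ 3 * y + 75 * x ^ 2 * y ^ 2 - 50 * x * y ^ 3 + 16 * y ^ 4

@[simp, norm_cast]
theorem Int.cast_quadratic (X Y : ℤ) : ((quadratic X Y : ℤ) : R) = quadratic (X : R) Y := by
  simp [quadratic]

@[simp, norm_cast]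
theorem Int.cast_cubic (X Y : ℤ) : ((cubic X Y : ℤ) : R) = cubic (X : R) Y := by
  simp [cubic]

@[simp, norm_cast]
theorem Int.cast_quartic (X Y : ℤ) : ((quartic X Y : ℤ) : R) = quartic (X : R) Y := by
  simp [quartic]

end Forms

theorem even_quartic_sub_cubic_and_quartic_add_cubic_and_cubic_sub_quadratic {X Y : ℤ}
    (h : Even X ∨ Even Y) :
    Even (quartic X Y - cubic X Y) ∧ Even (quartic X Y + cubic X Y) ∧
      Even (cubic X Y - quadratic X Y) := by
  simp only [← ZMod.intCast_eq_zero_iff_even] at h ⊢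
  push_cast
  generalize (X : ZMod 2) = u, (Y : ZMod 2) = v at h ⊢
  revert u v
  decide

theorem Even.exists_intCast_eq_div_two {N : ℤ} {q : ℚ} (h : Even N) (hq : (N : ℚ) = q) :
    ∃ M : ℤ, q / 2 = M := by
  obtain ⟨M, rfl⟩ := h
  exact ⟨M, by rw [← hq]; push_cast; ring⟩

section Positivity

variable {R : Type*} [CommRing R] [LinearOrder R] [IsStrictOrderedRing R] {x y : R}

theorem of_forall_nonneg_shift {p : R → R → Prop}
    (hp : ∀ s t : R, 0 ≤ s → 0 ≤ t → p (3 * (1 + s) + 1 + t) (1 + s))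
    (hy : 1 ≤ y) (hxy : 3 * y + 1 ≤ x) : p x y := by
  obtain ⟨t, ht, rfl⟩ : ∃ t, 0 ≤ t ∧ x = 3 * y + 1 + t := ⟨x - 3 * y - 1, by linarith, by ring⟩
  obtain ⟨s, hs, rfl⟩ : ∃ s, 0 ≤ s ∧ y = 1 + s := ⟨y - 1, by linarith, by ring⟩
  exact hp s t hs ht

theorem one_lt_quadratic (hy : 1 ≤ y) (hxy : 3 * y + 1 ≤ x) : 1 < quadratic x y := by
  refine of_forall_nonneg_shift (p := fun x y => 1 < quadratic x y) (fun s t hs ht => ?_) hy hxy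
  rw [← sub_pos]; unfold quadratic; ring_nf; positivity

theorem cubic_pos (hy : 1 ≤ y) (hxy : 3 * y + 1 ≤ x) : 0 < cubic x y := by
  refine of_forall_nonneg_shift (p := fun x y => 0 < cubic x y) (fun s t hs ht => ?_) hy hxy
  unfold cubic; ring_nf; positivity

theorem two_lt_quartic_sub_cubic (hy : 1 ≤ y) (hxy : 3 * y + 1 ≤ x) :
    2 < quartic x y - cubic x y := by
  refine of_forall_nonneg_shift (p := fun x y => 2 < quartic x y - cubic x y) (fun s t hs ht => ?_) hy hxy
  rw [← sub_pos]; unfold quartic cubic; ring_nf; positivity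

end Positivity

theorem regular_triple_construction (n : ℕ) :
    let x : ℚ := P (n + 1)
    let y : ℚ := P n
    let a : ℚ := 5 * x ^ 2 - 12 * x * y + 8 * y ^ 2
    let b : ℚ := (31 * x ^ 4 - 55 * x ^ 3 * y + 75 * x ^ 2 * y ^ 2 - 50 * x * y ^ 3 + 16 * y ^ 4
      - 17 * x ^ 3 + 33 * x ^ 2 * y - 28 * x * y ^ 2 + 14 * y ^ 3) / 2
    let c : ℚ := (31 * x ^ 4 - 55 * x ^ 3 * y + 75 * x ^ 2 * y ^ 2 - 50 * x * y ^ 3 + 16 * y ^ 4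
      + 17 * x ^ 3 - 33 * x ^ 2 * y + 28 * x * y ^ 2 - 14 * y ^ 3) / 2
    let r : ℚ := (17 * x ^ 3 - 33 * x ^ 2 * y - 5 * x ^ 2 + 28 * x * y ^ 2 + 12 * x * y
      - 14 * y ^ 3 - 8 * y ^ 2) / 2
    (∃ B : ℤ, b = B) ∧ (∃ C : ℤ, c = C) ∧ (∃ R : ℤ, r = R) ∧
    (1 ≤ n → 1 < a ∧ 1 < b ∧ 1 < c) ∧
    c = a + b + 2 * r := by
  intro x y a b c r
  have ha : a = quadratic x y := rfl
  have hb : b = (quartic x y - cubic x y) / 2 := by simp only [b, quartic, cubic]; ring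
  have hc : c = (quartic x y + cubic x y) / 2 := by simp only [c, quartic, cubic]; ring
  have hr : r = (cubic x y - quadratic x y) / 2 := by simp only [r, quadratic, cubic]; ring
  obtain ⟨hb_even, hc_even, hr_even⟩ :=
    even_quartic_sub_cubic_and_quartic_add_cubic_and_cubic_sub_quadratic
      (even_P_succ_or_even_P n)
  refine ⟨?_, ?_, ?_, fun hn => ?_, by rw [ha, hb, hc, hr]; ring⟩
  · rw [hb]; exact hb_even.exists_intCast_eq_div_two (by push_cast; rfl)
  · rw [hc]; exact hc_even.exists_intCast_eq_div_two (by push_cast; rfl)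
  · rw [hr]; exact hr_even.exists_intCast_eq_div_two (by push_cast; rfl)
  obtain ⟨m, rfl⟩ := Nat.exists_eq_add_of_le' hn
  have hy : (1 : ℚ) ≤ y := by simpa using (Int.cast_le (R := ℚ)).mpr (one_le_P hn)
  have hxy : 3 * y + 1 ≤ x := by
    simpa using (Int.cast_le (R := ℚ)).mpr (three_mul_P_add_one_le m)
  have hq := two_lt_quartic_sub_cubic hy hxy
  have hk := cubic_pos hy hxy
  exact ⟨one_lt_quadratic hy hxy, by rw [hb]; linarith, by rw [hc]; linarith⟩
end
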